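/- arXiv:1304.0157 — 2 statements merged into one kernel-verified Lean document; each statement's English description precedes it below -/
import Mathlib

section
/- Let α, β, γ, δ > 0 be real numbers and let Φ_1,…,Φ_{n₁}, Φ̄_1,…,Φ̄_{n₂}, Ψ_1,…,Ψ_{n₃}, Ψ̄_1,…,Ψ̄_{n₄} be positive linear maps on B(H) with Σ_{i=1}^{n₁} Φ_i(I) = α·I, Σ_{i=1}^{n₂} Φ̄_i(I) = δ·I, Σ_{i=1}^{n₃} Ψ_i(I) = γ·I and Σ_{i=1}^{n₄} Ψ̄_i(I) = β·I. Let m < M be real numbers, let J be an interval containing [m, M], and let A_i (i = 1,…,n₁), D_i (i = 1,…,n₂), C_i (i = 1,…,n₃), B_i (i = 1,…,n₄) be operators in σ(J) with A_i ≤ m·I, m·I ≤ B_i ≤ M·I, m·I ≤ C_i ≤ M·I and M·I ≤ D_i. Assume (1/α)·Σ_i Φ_i(A_i) + (1/δ)·Σ_i Φ̄_i(D_i) = (1/γ)·Σ_i Ψ_i(C_i) + (1/β)·Σ_i Ψ̄_i(B_i). Then for every continuous convex function f : J → ℝ, f((1/γ)·Σ_i Ψ_i(C_i)) + (1/β)·Σ_i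 Ψ̄_i(f(B_i)) ≤ f((1/α)·Σ_i Φ_i(A_i)) + (1/δ)·Σ_i Φ̄_i(f(D_i)) − δ_f · X̃₃ ≤ f((1/α)·Σ_i Φ_i(A_i)) + (1/δ)·Σ_i Φ̄_i(f(D_i)), where X̃₃ = I − (1/(M−m))·[ |(1/γ)·Σ_i Ψ_i(C_i) − ((m+M)/2)·I| + (1/β)·Σ_i Ψ̄_i(|B_i − ((m+M)/2)·I|) ]. -/
/-- The absolute value of a (self-adjoint) bounded operator, via the
continuous functional calculus. -/
noncomputable def opAbs {H : Type*} [NormedAddCommGroup H] [InnerProductSpace ℂ H]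
    [CompleteSpace H] (A : H →L[ℂ] H) : H →L[ℂ] H :=
  cfc (fun t : ℝ => |t|) A

/-!
Let `ℓ` be the chord of `f` through `(m, f m)` and `(M, f M)`. Convexity puts `f` above `ℓ`
outside `(m, M)`, and on `[m, M]` it gives the sharper bound `f + δ_f · tent ≤ ℓ`, where
`tent x = 1/2 - |x - (m+M)/2| / (M - m)`: on each half of `[m, M]` compare `f` with its chord
to the midpoint. Both inequalities pass to operators through the functional calculus and then
through the normalised positive maps, which send `k • T + c • 1` to `k • (mean of T) + c • 1`.
Since `ℓ` is affine and the two weighted sums of arguments agree, the resulting upper bound for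
the `C, B` side equals the lower bound for the `A, D` side. The correction term `X̃` is the
averaged tent, hence nonnegative, and `δ_f ≥ 0` by midpoint convexity.
-/

open Finset

section Scalar

variable {J : Set ℝ} {f : ℝ → ℝ} {m M : ℝ}

noncomputable def tent (m M x : ℝ) : ℝ := 1 / 2 - |x - (m + M) / 2| / (M - m)

@[fun_prop]
lemma continuous_tent (m M : ℝ) : Continuous (tent m M) := by
  unfold tent
  fun_prop

lemma tent_nonneg (hmM : m < M) {x : ℝ} (hx : x ∈ Set.Icc m M) : 0 ≤ tent m M x := by
  rw [tent, sub_nonneg, div_le_iff₀ (sub_pos.2 hmM), abs_le]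
  constructor <;> linarith [hx.1, hx.2]

lemma ConvexOn.le_add_mul_sub (hconv : ConvexOn ℝ J f) {a b s : ℝ} (ha : a ∈ J) (hb : b ∈ J)
    (hs₀ : 0 ≤ s) (hs₁ : s ≤ 1) : f (a + s * (b - a)) ≤ f a + s * (f b - f a) := by
  have h := hconv.2 ha hb (sub_nonneg.2 hs₁) hs₀ (by ring)
  simp only [smul_eq_mul] at h
  rw [show a + s * (b - a) = (1 - s) * a + s * b by ring]
  linarith

lemma ConvexOn.sub_two_mul_map_midpoint_nonneg (hconv : ConvexOn ℝ J f) (hm : m ∈ J)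
    (hM : M ∈ J) : 0 ≤ f m + f M - 2 * f ((m + M) / 2) := by
  have h := hconv.le_add_mul_sub hm hM (s := 1 / 2) (by norm_num) (by norm_num)
  rw [show m + 1 / 2 * (M - m) = (m + M) / 2 by ring] at h
  linarith

lemma ConvexOn.chord_le_of_notMem_Ioo (hconv : ConvexOn ℝ J f) (hm : m ∈ J) (hM : M ∈ J)
    (hmM : m < M) {x : ℝ} (hx : x ∈ J) (hx' : x ∉ Set.Ioo m M) :
    f m + slope f m M * (x - m) ≤ f x := by
  rcases lt_trichotomy x m with hxm | rfl | hmx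
  · have h := hconv.slope_mono hm ⟨hx, hxm.ne⟩ ⟨hM, hmM.ne'⟩ (hxm.trans hmM).le
    rw [slope_def_field f m x, div_le_iff_of_neg (sub_neg.2 hxm)] at h
    linarith
  · simp
  · have hMx : M ≤ x := not_lt.1 fun hxM => hx' ⟨hmx, hxM⟩
    have h := hconv.slope_mono hm ⟨hM, hmM.ne'⟩ ⟨hx, hmx.ne'⟩ hMx
    rw [slope_def_field f m x, le_div_iff₀ (sub_pos.2 hmx)] at h
    linarith

lemma ConvexOn.add_mul_tent_le_chord (hconv : ConvexOn ℝ J f) (hm : m ∈ J) (hM : M ∈ J)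
    (hmM : m < M) {x : ℝ} (hx : x ∈ Set.Icc m M) :
    f x + (f m + f M - 2 * f ((m + M) / 2)) * tent m M x ≤ f m + slope f m M * (x - m) := by
  have hμ : (m + M) / 2 ∈ J := hconv.1.ordConnected.out hm hM ⟨by linarith, by linarith⟩
  have hd : 0 < M - m := sub_pos.2 hmM
  set t := (x - m) / (M - m) with ht
  have hx_eq : x = m + t * (M - m) := by rw [ht, div_mul_cancel₀ _ hd.ne']; ring
  have ht₀ : 0 ≤ t := div_nonneg (by linarith [hx.1]) hd.le
  have ht₁ : t ≤ 1 := (div_le_one hd).2 (by linarith [hx.2])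
  have hchord : f m + slope f m M * (x - m) = f m + t * (f M - f m) := by
    rw [slope_def_field, hx_eq]; field_simp; ring
  rw [hchord]
  rcases le_total x ((m + M) / 2) with hxμ | hμx
  · have htent : tent m M x = t := by
      rw [tent, abs_of_nonpos (by linarith), hx_eq]; field_simp; ring
    have h := hconv.le_add_mul_sub hm hμ (s := 2 * t) (by linarith)
      (by rw [hx_eq] at hxμ; nlinarith)
    rw [show m + 2 * t * ((m + M) / 2 - m) = x by rw [hx_eq]; ring] at h
    rw [htent]
    linarith
  · have htent : tent m M x = 1 - t := by
      rw [tent, abs_of_nonneg (by linarith), hx_eq]; field_simp; ring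
    have h := hconv.le_add_mul_sub hμ hM (s := 2 * t - 1)
      (by rw [hx_eq] at hμx; nlinarith) (by linarith)
    rw [show (m + M) / 2 + (2 * t - 1) * (M - (m + M) / 2) = x by rw [hx_eq]; ring] at h
    rw [htent]
    linarith

end Scalar

section Operator

variable {𝒜 : Type*} [CStarAlgebra 𝒜] {ι : Type*} [Fintype ι] {Φ : ι → 𝒜 →ₗ[ℂ] 𝒜}

lemma cfc_const_add_mul_sub {T : 𝒜} (hT : IsSelfAdjoint T) (a b c : ℝ) :
    cfc (fun x : ℝ => a + b * (x - c)) T = b • T + (a - b * c) • 1 := by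
  have h : (fun x : ℝ => a + b * (x - c)) = fun x => b * x + (a - b * c) := by
    funext x; ring
  rw [h, cfc_add_const (a - b * c) (b * ·) T, cfc_const_mul_id b T,
    Algebra.algebraMap_eq_smul_one]

lemma cfc_abs_sub {T : 𝒜} (hT : IsSelfAdjoint T) (μ : ℝ) :
    cfc (fun x : ℝ => |x - μ|) T = cfc (fun t : ℝ => |t|) (T - μ • 1) := by
  have h : T - μ • 1 = cfc (fun x : ℝ => x - μ) T := by
    rw [cfc_sub (fun x : ℝ => x) (fun _ => μ) T, cfc_id' ℝ T, cfc_const μ T,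
      Algebra.algebraMap_eq_smul_one]
  rw [h, ← cfc_comp' (fun t : ℝ => |t|) (fun x : ℝ => x - μ) T]

lemma cfc_tent {T : 𝒜} (hT : IsSelfAdjoint T) (m M : ℝ) :
    cfc (tent m M) T =
      (-(M - m)⁻¹) • cfc (fun t : ℝ => |t|) (T - ((m + M) / 2) • 1) + (1 / 2 : ℝ) • 1 := by
  have h : tent m M = fun x => -(M - m)⁻¹ * |x - (m + M) / 2| + 1 / 2 := by
    funext x; simp only [tent]; ring
  rw [h, cfc_add_const _ _ T, cfc_const_mul _ _ T, cfc_abs_sub hT, Algebra.algebraMap_eq_smul_one]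

lemma smul_sum_map_add (α : ℝ) (S T : ι → 𝒜) :
    α⁻¹ • ∑ i, Φ i (S i + T i) = α⁻¹ • ∑ i, Φ i (S i) + α⁻¹ • ∑ i, Φ i (T i) := by
  simp only [map_add, sum_add_distrib, smul_add]

lemma smul_sum_map_smul (α r : ℝ) (T : ι → 𝒜) :
    α⁻¹ • ∑ i, Φ i (r • T i) = r • (α⁻¹ • ∑ i, Φ i (T i)) := by
  simp only [LinearMap.map_smul_of_tower, ← smul_sum, smul_comm α⁻¹ r]

lemma smul_sum_map_smul_one {α : ℝ} (hα : α ≠ 0) (hΦ1 : ∑ i, Φ i 1 = α • 1) (c : ℝ) :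
    α⁻¹ • ∑ i, Φ i (c • 1) = c • 1 := by
  simp only [LinearMap.map_smul_of_tower, ← smul_sum, hΦ1, smul_smul]
  rw [mul_left_comm, inv_mul_cancel₀ hα, mul_one]

lemma smul_sum_map_smul_add_smul_one {α : ℝ} (hα : α ≠ 0) (hΦ1 : ∑ i, Φ i 1 = α • 1)
    (k c : ℝ) (T : ι → 𝒜) :
    α⁻¹ • ∑ i, Φ i (k • T i + c • 1) = k • (α⁻¹ • ∑ i, Φ i (T i)) + c • 1 := by
  rw [smul_sum_map_add, smul_sum_map_smul_one hα hΦ1, smul_sum_map_smul]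

lemma cfc_tent_add_smul_sum_map_cfc_tent {α : ℝ} (hα : α ≠ 0) (hΦ1 : ∑ i, Φ i 1 = α • 1)
    (m M : ℝ) {T : 𝒜} (hT : IsSelfAdjoint T) {S : ι → 𝒜} (hS : ∀ i, IsSelfAdjoint (S i)) :
    cfc (tent m M) T + α⁻¹ • ∑ i, Φ i (cfc (tent m M) (S i)) =
      1 - (M - m)⁻¹ • (cfc (fun t : ℝ => |t|) (T - ((m + M) / 2) • 1) +
        α⁻¹ • ∑ i, Φ i (cfc (fun t : ℝ => |t|) (S i - ((m + M) / 2) • 1))) := by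
  simp only [cfc_tent hT, fun i => cfc_tent (hS i) m M, smul_sum_map_smul_add_smul_one hα hΦ1]
  module

variable [PartialOrder 𝒜] [StarOrderedRing 𝒜]

lemma IsSelfAdjoint.of_smul_one_le {r : ℝ} {T : 𝒜} (h : r • 1 ≤ T) : IsSelfAdjoint T := by
  simpa using (IsSelfAdjoint.of_nonneg (sub_nonneg.2 h)).add (.smul (.all r) (.one 𝒜))

lemma IsSelfAdjoint.of_le_smul_one {r : ℝ} {T : 𝒜} (h : T ≤ r • 1) : IsSelfAdjoint T := by
  simpa using (IsSelfAdjoint.smul (.all r) (.one 𝒜)).sub (.of_nonneg (sub_nonneg.2 h))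

lemma spectrum_subset_Ici_of_smul_one_le {r : ℝ} {T : 𝒜} (h : r • 1 ≤ T) :
    spectrum ℝ T ⊆ Set.Ici r := by
  have hT := IsSelfAdjoint.of_smul_one_le h
  rw [← Algebra.algebraMap_eq_smul_one, algebraMap_le_iff_le_spectrum hT] at h
  exact h

lemma spectrum_subset_Iic_of_le_smul_one {r : ℝ} {T : 𝒜} (h : T ≤ r • 1) :
    spectrum ℝ T ⊆ Set.Iic r := by
  have hT := IsSelfAdjoint.of_le_smul_one h
  rw [← Algebra.algebraMap_eq_smul_one, le_algebraMap_iff_spectrum_le hT] at h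
  exact h

lemma spectrum_subset_Icc_of_le {r s : ℝ} {T : 𝒜} (hr : r • 1 ≤ T) (hs : T ≤ s • 1) :
    spectrum ℝ T ⊆ Set.Icc r s :=
  fun _ hx => ⟨spectrum_subset_Ici_of_smul_one_le hr hx, spectrum_subset_Iic_of_le_smul_one hs hx⟩

lemma exists_mem_smul_one_le_of_spectrum_subset {κ : Type*} [Finite κ] {J : Set ℝ} {m : ℝ}
    (hm : m ∈ J) {A : κ → 𝒜} (hspec : ∀ i, spectrum ℝ (A i) ⊆ J) (hA : ∀ i, A i ≤ m • 1) :
    ∃ a ∈ J, a ≤ m ∧ ∀ i, a • 1 ≤ A i := by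
  set S := insert m (⋃ i, spectrum ℝ (A i))
  have hS : IsCompact S := (isCompact_iUnion fun i => spectrum.isCompact (A i)).insert m
  refine ⟨sInf S, ?_, csInf_le hS.bddBelow (Set.mem_insert m _), fun i => ?_⟩
  · rcases hS.sInf_mem (Set.insert_nonempty m _) with h | h
    · exact h ▸ hm
    · obtain ⟨i, hi⟩ := Set.mem_iUnion.1 h
      exact hspec i hi
  · rw [← Algebra.algebraMap_eq_smul_one,
      algebraMap_le_iff_le_spectrum (IsSelfAdjoint.of_le_smul_one (hA i))]
    exact fun x hx => csInf_le hS.bddBelow (Set.mem_insert_of_mem m (Set.mem_iUnion.2 ⟨i, hx⟩))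

lemma LinearMap.monotone_of_map_nonneg (L : 𝒜 →ₗ[ℂ] 𝒜) (hL : ∀ T, 0 ≤ T → 0 ≤ L T) :
    Monotone L :=
  fun S T h => sub_nonneg.1 (by simpa using hL _ (sub_nonneg.2 h))

lemma smul_sum_map_mono {α : ℝ} (hα : 0 ≤ α) (hΦ : ∀ i T, 0 ≤ T → 0 ≤ Φ i T) {S T : ι → 𝒜}
    (h : ∀ i, S i ≤ T i) : α⁻¹ • ∑ i, Φ i (S i) ≤ α⁻¹ • ∑ i, Φ i (T i) :=
  smul_le_smul_of_nonneg_left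
    (sum_le_sum fun i _ => (Φ i).monotone_of_map_nonneg (hΦ i) (h i)) (inv_nonneg.2 hα)

lemma smul_one_le_smul_sum_map {α : ℝ} (hα : 0 < α) (hΦ : ∀ i T, 0 ≤ T → 0 ≤ Φ i T)
    (hΦ1 : ∑ i, Φ i 1 = α • 1) {r : ℝ} {T : ι → 𝒜} (h : ∀ i, r • 1 ≤ T i) :
    r • 1 ≤ α⁻¹ • ∑ i, Φ i (T i) := by
  simpa only [smul_sum_map_smul_one hα.ne' hΦ1] using smul_sum_map_mono hα.le hΦ h

lemma smul_sum_map_le_smul_one {α : ℝ} (hα : 0 < α) (hΦ : ∀ i T, 0 ≤ T → 0 ≤ Φ i T)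
    (hΦ1 : ∑ i, Φ i 1 = α • 1) {r : ℝ} {T : ι → 𝒜} (h : ∀ i, T i ≤ r • 1) :
    α⁻¹ • ∑ i, Φ i (T i) ≤ r • 1 := by
  simpa only [smul_sum_map_smul_one hα.ne' hΦ1] using smul_sum_map_mono hα.le hΦ h

variable {J : Set ℝ} {f : ℝ → ℝ} {m M : ℝ}

lemma cfc_tent_nonneg (hmM : m < M) {T : 𝒜} (hl : m • 1 ≤ T) (hu : T ≤ M • 1) :
    0 ≤ cfc (tent m M) T :=
  cfc_nonneg fun _ hx => tent_nonneg hmM (spectrum_subset_Icc_of_le hl hu hx)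

lemma ConvexOn.cfc_add_smul_cfc_tent_le (hconv : ConvexOn ℝ J f) (hf : ContinuousOn f J)
    (hm : m ∈ J) (hM : M ∈ J) (hmM : m < M) {T : 𝒜} (hl : m • 1 ≤ T) (hu : T ≤ M • 1) :
    cfc f T + (f m + f M - 2 * f ((m + M) / 2)) • cfc (tent m M) T ≤
      slope f m M • T + (f m - slope f m M * m) • 1 := by
  have hT := IsSelfAdjoint.of_smul_one_le hl
  have hspec := spectrum_subset_Icc_of_le hl hu
  have hfT : ContinuousOn f (spectrum ℝ T) :=
    hf.mono (hspec.trans (hconv.1.ordConnected.out hm hM))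
  rw [← cfc_const_add_mul_sub hT, ← cfc_const_mul _ (tent m M) T, ← cfc_add T f _ hfT]
  exact cfc_mono fun x hx => hconv.add_mul_tent_le_chord hm hM hmM (hspec hx)

lemma ConvexOn.chord_le_cfc (hconv : ConvexOn ℝ J f) (hf : ContinuousOn f J)
    (hm : m ∈ J) (hM : M ∈ J) (hmM : m < M) {T : 𝒜} (hT : IsSelfAdjoint T)
    (hspec : spectrum ℝ T ⊆ J) (hout : ∀ x ∈ spectrum ℝ T, x ∉ Set.Ioo m M) :
    slope f m M • T + (f m - slope f m M * m) • 1 ≤ cfc f T := by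
  rw [← cfc_const_add_mul_sub hT]
  exact cfc_mono (hg := hf.mono hspec) fun x hx =>
    hconv.chord_le_of_notMem_Ioo hm hM hmM (hspec hx) (hout x hx)

lemma ConvexOn.smul_sum_map_cfc_add_smul_tent_le (hconv : ConvexOn ℝ J f)
    (hf : ContinuousOn f J) (hm : m ∈ J) (hM : M ∈ J) (hmM : m < M) {α : ℝ} (hα : 0 < α)
    (hΦ : ∀ i T, 0 ≤ T → 0 ≤ Φ i T) (hΦ1 : ∑ i, Φ i 1 = α • 1) {T : ι → 𝒜}
    (hl : ∀ i, m • 1 ≤ T i) (hu : ∀ i, T i ≤ M • 1) :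
    α⁻¹ • ∑ i, Φ i (cfc f (T i)) +
        (f m + f M - 2 * f ((m + M) / 2)) • (α⁻¹ • ∑ i, Φ i (cfc (tent m M) (T i))) ≤
      slope f m M • (α⁻¹ • ∑ i, Φ i (T i)) + (f m - slope f m M * m) • 1 := by
  rw [← smul_sum_map_smul, ← smul_sum_map_add, ← smul_sum_map_smul_add_smul_one hα.ne' hΦ1]
  exact smul_sum_map_mono hα.le hΦ fun i =>
    hconv.cfc_add_smul_cfc_tent_le hf hm hM hmM (hl i) (hu i)

lemma ConvexOn.chord_le_smul_sum_map_cfc (hconv : ConvexOn ℝ J f) (hf : ContinuousOn f J)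
    (hm : m ∈ J) (hM : M ∈ J) (hmM : m < M) {α : ℝ} (hα : 0 < α)
    (hΦ : ∀ i T, 0 ≤ T → 0 ≤ Φ i T) (hΦ1 : ∑ i, Φ i 1 = α • 1) {T : ι → 𝒜}
    (hT : ∀ i, M • 1 ≤ T i) (hspec : ∀ i, spectrum ℝ (T i) ⊆ J) :
    slope f m M • (α⁻¹ • ∑ i, Φ i (T i)) + (f m - slope f m M * m) • 1 ≤
      α⁻¹ • ∑ i, Φ i (cfc f (T i)) := by
  rw [← smul_sum_map_smul_add_smul_one hα.ne' hΦ1]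
  exact smul_sum_map_mono hα.le hΦ fun i =>
    hconv.chord_le_cfc hf hm hM hmM (.of_smul_one_le (hT i)) (hspec i) fun x hx hx' =>
      (spectrum_subset_Ici_of_smul_one_le (hT i) hx).not_gt hx'.2

lemma ConvexOn.cfc_add_smul_sum_map_cfc_add_smul_tent_le (hconv : ConvexOn ℝ J f)
    (hf : ContinuousOn f J) (hm : m ∈ J) (hM : M ∈ J) (hmM : m < M) {α : ℝ} (hα : 0 < α)
    (hΦ : ∀ i T, 0 ≤ T → 0 ≤ Φ i T) (hΦ1 : ∑ i, Φ i 1 = α • 1) {T : 𝒜} (hTl : m • 1 ≤ T)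
    (hTu : T ≤ M • 1) {S : ι → 𝒜} (hSl : ∀ i, m • 1 ≤ S i) (hSu : ∀ i, S i ≤ M • 1) :
    cfc f T + α⁻¹ • ∑ i, Φ i (cfc f (S i)) + (f m + f M - 2 * f ((m + M) / 2)) •
        (cfc (tent m M) T + α⁻¹ • ∑ i, Φ i (cfc (tent m M) (S i))) ≤
      slope f m M • (T + α⁻¹ • ∑ i, Φ i (S i)) + (2 * (f m - slope f m M * m)) • 1 := by
  calc _ = (cfc f T + (f m + f M - 2 * f ((m + M) / 2)) • cfc (tent m M) T) +
        (α⁻¹ • ∑ i, Φ i (cfc f (S i)) + (f m + f M - 2 * f ((m + M) / 2)) •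
          (α⁻¹ • ∑ i, Φ i (cfc (tent m M) (S i)))) := by module
    _ ≤ (slope f m M • T + (f m - slope f m M * m) • 1) +
        (slope f m M • (α⁻¹ • ∑ i, Φ i (S i)) + (f m - slope f m M * m) • 1) :=
      add_le_add (hconv.cfc_add_smul_cfc_tent_le hf hm hM hmM hTl hTu)
        (hconv.smul_sum_map_cfc_add_smul_tent_le hf hm hM hmM hα hΦ hΦ1 hSl hSu)
    _ = _ := by module

lemma ConvexOn.chord_le_cfc_add_smul_sum_map_cfc (hconv : ConvexOn ℝ J f)
    (hf : ContinuousOn f J) (hm : m ∈ J) (hM : M ∈ J) (hmM : m < M) {α : ℝ} (hα : 0 < α)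
    (hΦ : ∀ i T, 0 ≤ T → 0 ≤ Φ i T) (hΦ1 : ∑ i, Φ i 1 = α • 1) {T : 𝒜} (hT : T ≤ m • 1)
    (hTspec : spectrum ℝ T ⊆ J) {S : ι → 𝒜} (hS : ∀ i, M • 1 ≤ S i)
    (hSspec : ∀ i, spectrum ℝ (S i) ⊆ J) :
    slope f m M • (T + α⁻¹ • ∑ i, Φ i (S i)) + (2 * (f m - slope f m M * m)) • 1 ≤
      cfc f T + α⁻¹ • ∑ i, Φ i (cfc f (S i)) := by
  calc _ = (slope f m M • T + (f m - slope f m M * m) • 1) +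
        (slope f m M • (α⁻¹ • ∑ i, Φ i (S i)) + (f m - slope f m M * m) • 1) := by module
    _ ≤ _ := add_le_add
      (hconv.chord_le_cfc hf hm hM hmM (.of_le_smul_one hT) hTspec fun x hx hx' =>
        (spectrum_subset_Iic_of_le_smul_one hT hx).not_gt hx'.1)
      (hconv.chord_le_smul_sum_map_cfc hf hm hM hmM hα hΦ hΦ1 hS hSspec)

end Operator

theorem jensen_type_variant_two_general {H : Type*} [NormedAddCommGroup H] [InnerProductSpace ℂ H]
    [CompleteSpace H] {n₁ n₂ n₃ n₄ : ℕ} (α β γ δ : ℝ)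
    (hα : 0 < α) (hβ : 0 < β) (hγ : 0 < γ) (hδ : 0 < δ)
    (Φ : Fin n₁ → (H →L[ℂ] H) →ₗ[ℂ] (H →L[ℂ] H))
    (Φb : Fin n₂ → (H →L[ℂ] H) →ₗ[ℂ] (H →L[ℂ] H))
    (Ψ : Fin n₃ → (H →L[ℂ] H) →ₗ[ℂ] (H →L[ℂ] H))
    (Ψb : Fin n₄ → (H →L[ℂ] H) →ₗ[ℂ] (H →L[ℂ] H))
    (hΦpos : ∀ i, ∀ T : H →L[ℂ] H, 0 ≤ T → 0 ≤ Φ i T)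
    (hΦbpos : ∀ i, ∀ T : H →L[ℂ] H, 0 ≤ T → 0 ≤ Φb i T)
    (hΨpos : ∀ i, ∀ T : H →L[ℂ] H, 0 ≤ T → 0 ≤ Ψ i T)
    (hΨbpos : ∀ i, ∀ T : H →L[ℂ] H, 0 ≤ T → 0 ≤ Ψb i T)
    (hΦ1 : ∑ i, Φ i 1 = α • (1 : H →L[ℂ] H))
    (hΦb1 : ∑ i, Φb i 1 = δ • (1 : H →L[ℂ] H))
    (hΨ1 : ∑ i, Ψ i 1 = γ • (1 : H →L[ℂ] H))
    (hΨb1 : ∑ i, Ψb i 1 = β • (1 : H →L[ℂ] H))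
    (m M : ℝ) (hmM : m < M) (J : Set ℝ) (hJ : J.OrdConnected) (hJmM : Set.Icc m M ⊆ J)
    (A : Fin n₁ → H →L[ℂ] H) (D : Fin n₂ → H →L[ℂ] H)
    (C : Fin n₃ → H →L[ℂ] H) (B : Fin n₄ → H →L[ℂ] H)
    (hAspec : ∀ i, spectrum ℝ (A i) ⊆ J)
    (hDspec : ∀ i, spectrum ℝ (D i) ⊆ J)
    (hA : ∀ i, A i ≤ m • 1) (hD : ∀ i, M • 1 ≤ D i)
    (hBl : ∀ i, m • 1 ≤ B i) (hBu : ∀ i, B i ≤ M • 1)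
    (hCl : ∀ i, m • 1 ≤ C i) (hCu : ∀ i, C i ≤ M • 1)
    (hsum : α⁻¹ • ∑ i, Φ i (A i) + δ⁻¹ • ∑ i, Φb i (D i) =
      γ⁻¹ • ∑ i, Ψ i (C i) + β⁻¹ • ∑ i, Ψb i (B i))
    (f : ℝ → ℝ) (hf : ContinuousOn f J) (hconv : ConvexOn ℝ J f) :
    cfc f (γ⁻¹ • ∑ i, Ψ i (C i)) + β⁻¹ • ∑ i, Ψb i (cfc f (B i)) ≤
        cfc f (α⁻¹ • ∑ i, Φ i (A i)) + δ⁻¹ • ∑ i, Φb i (cfc f (D i)) -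
          (f m + f M - 2 * f ((m + M) / 2)) •
            ((1 : H →L[ℂ] H) -
              (M - m)⁻¹ •
                (opAbs (γ⁻¹ • ∑ i, Ψ i (C i) - ((m + M) / 2) • 1) +
                  β⁻¹ • ∑ i, Ψb i (opAbs (B i - ((m + M) / 2) • 1)))) ∧
      cfc f (α⁻¹ • ∑ i, Φ i (A i)) + δ⁻¹ • ∑ i, Φb i (cfc f (D i)) -
          (f m + f M - 2 * f ((m + M) / 2)) •
            ((1 : H →L[ℂ] H) -
              (M - m)⁻¹ •
                (opAbs (γ⁻¹ • ∑ i, Ψ i (C i) - ((m + M) / 2) • 1) +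
                  β⁻¹ • ∑ i, Ψb i (opAbs (B i - ((m + M) / 2) • 1)))) ≤
        cfc f (α⁻¹ • ∑ i, Φ i (A i)) + δ⁻¹ • ∑ i, Φb i (cfc f (D i)) := by
  have hm : m ∈ J := hJmM ⟨le_rfl, hmM.le⟩
  have hM : M ∈ J := hJmM ⟨hmM.le, le_rfl⟩
  have hXl := smul_one_le_smul_sum_map hγ hΨpos hΨ1 hCl
  have hXu := smul_sum_map_le_smul_one hγ hΨpos hΨ1 hCu
  have hYu := smul_sum_map_le_smul_one hα hΦpos hΦ1 hA
  -- `f` is only known on `J`, so the `A`-mean needs a lower bound inside `J`.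
  obtain ⟨a, haJ, -, haA⟩ := exists_mem_smul_one_le_of_spectrum_subset hm hAspec hA
  have hYspec : spectrum ℝ (α⁻¹ • ∑ i, Φ i (A i)) ⊆ J :=
    (spectrum_subset_Icc_of_le (smul_one_le_smul_sum_map hα hΦpos hΦ1 haA) hYu).trans
      (hJ.out haJ hm)
  simp only [opAbs]
  rw [← cfc_tent_add_smul_sum_map_cfc_tent hβ.ne' hΨb1 m M (.of_smul_one_le hXl)
    fun i => .of_smul_one_le (hBl i)]
  have hcorr_nonneg : 0 ≤ cfc (tent m M) (γ⁻¹ • ∑ i, Ψ i (C i)) +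
      β⁻¹ • ∑ i, Ψb i (cfc (tent m M) (B i)) :=
    add_nonneg (cfc_tent_nonneg hmM hXl hXu) (smul_nonneg (inv_nonneg.2 hβ.le)
      (sum_nonneg fun i _ => hΨbpos i _ (cfc_tent_nonneg hmM (hBl i) (hBu i))))
  refine ⟨le_sub_iff_add_le.2 ?_, sub_le_self _
    (smul_nonneg (hconv.sub_two_mul_map_midpoint_nonneg hm hM) hcorr_nonneg)⟩
  calc _ ≤ _ := hconv.cfc_add_smul_sum_map_cfc_add_smul_tent_le hf hm hM hmM hβ hΨbpos hΨb1
        hXl hXu hBl hBu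
    _ = _ := by rw [← hsum]
    _ ≤ _ := hconv.chord_le_cfc_add_smul_sum_map_cfc hf hm hM hmM hδ hΦbpos hΦb1 hYu hYspec
        hD hDspec

/-- Remark after Theorem 2.2, variant (2). -/
theorem jensen_type_variant_two {H : Type*} [NormedAddCommGroup H] [InnerProductSpace ℂ H]
    [CompleteSpace H] {n₁ n₂ n₃ n₄ : ℕ} (α β γ δ : ℝ)
    (hα : 0 < α) (hβ : 0 < β) (hγ : 0 < γ) (hδ : 0 < δ)
    (Φ : Fin n₁ → (H →L[ℂ] H) →ₗ[ℂ] (H →L[ℂ] H))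
    (Φb : Fin n₂ → (H →L[ℂ] H) →ₗ[ℂ] (H →L[ℂ] H))
    (Ψ : Fin n₃ → (H →L[ℂ] H) →ₗ[ℂ] (H →L[ℂ] H))
    (Ψb : Fin n₄ → (H →L[ℂ] H) →ₗ[ℂ] (H →L[ℂ] H))
    (hΦpos : ∀ i, ∀ T : H →L[ℂ] H, 0 ≤ T → 0 ≤ Φ i T)
    (hΦbpos : ∀ i, ∀ T : H →L[ℂ] H, 0 ≤ T → 0 ≤ Φb i T)
    (hΨpos : ∀ i, ∀ T : H →L[ℂ] H, 0 ≤ T → 0 ≤ Ψ i T)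
    (hΨbpos : ∀ i, ∀ T : H →L[ℂ] H, 0 ≤ T → 0 ≤ Ψb i T)
    (hΦ1 : ∑ i, Φ i 1 = α • (1 : H →L[ℂ] H))
    (hΦb1 : ∑ i, Φb i 1 = δ • (1 : H →L[ℂ] H))
    (hΨ1 : ∑ i, Ψ i 1 = γ • (1 : H →L[ℂ] H))
    (hΨb1 : ∑ i, Ψb i 1 = β • (1 : H →L[ℂ] H))
    (m M : ℝ) (hmM : m < M) (J : Set ℝ) (hJ : J.OrdConnected) (hJmM : Set.Icc m M ⊆ J)
    (A : Fin n₁ → H →L[ℂ] H) (D : Fin n₂ → H →L[ℂ] H)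
    (C : Fin n₃ → H →L[ℂ] H) (B : Fin n₄ → H →L[ℂ] H)
    (hAsa : ∀ i, IsSelfAdjoint (A i)) (hAspec : ∀ i, spectrum ℝ (A i) ⊆ J)
    (hDsa : ∀ i, IsSelfAdjoint (D i)) (hDspec : ∀ i, spectrum ℝ (D i) ⊆ J)
    (hCsa : ∀ i, IsSelfAdjoint (C i)) (hCspec : ∀ i, spectrum ℝ (C i) ⊆ J)
    (hBsa : ∀ i, IsSelfAdjoint (B i)) (hBspec : ∀ i, spectrum ℝ (B i) ⊆ J)
    (hA : ∀ i, A i ≤ m • 1) (hD : ∀ i, M • 1 ≤ D i)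
    (hBl : ∀ i, m • 1 ≤ B i) (hBu : ∀ i, B i ≤ M • 1)
    (hCl : ∀ i, m • 1 ≤ C i) (hCu : ∀ i, C i ≤ M • 1)
    (hsum : α⁻¹ • ∑ i, Φ i (A i) + δ⁻¹ • ∑ i, Φb i (D i) =
      γ⁻¹ • ∑ i, Ψ i (C i) + β⁻¹ • ∑ i, Ψb i (B i))
    (f : ℝ → ℝ) (hf : ContinuousOn f J) (hconv : ConvexOn ℝ J f) :
    cfc f (γ⁻¹ • ∑ i, Ψ i (C i)) + β⁻¹ • ∑ i, Ψb i (cfc f (B i)) ≤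
        cfc f (α⁻¹ • ∑ i, Φ i (A i)) + δ⁻¹ • ∑ i, Φb i (cfc f (D i)) -
          (f m + f M - 2 * f ((m + M) / 2)) •
            ((1 : H →L[ℂ] H) -
              (M - m)⁻¹ •
                (opAbs (γ⁻¹ • ∑ i, Ψ i (C i) - ((m + M) / 2) • 1) +
                  β⁻¹ • ∑ i, Ψb i (opAbs (B i - ((m + M) / 2) • 1)))) ∧
      cfc f (α⁻¹ • ∑ i, Φ i (A i)) + δ⁻¹ • ∑ i, Φb i (cfc f (D i)) -
          (f m + f M - 2 * f ((m + M) / 2)) •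
            ((1 : H →L[ℂ] H) -
              (M - m)⁻¹ •
                (opAbs (γ⁻¹ • ∑ i, Ψ i (C i) - ((m + M) / 2) • 1) +
                  β⁻¹ • ∑ i, Ψb i (opAbs (B i - ((m + M) / 2) • 1)))) ≤
        cfc f (α⁻¹ • ∑ i, Φ i (A i)) + δ⁻¹ • ∑ i, Φb i (cfc f (D i)) :=
  jensen_type_variant_two_general α β γ δ hα hβ hγ hδ Φ Φb Ψ Ψb hΦpos hΦbpos hΨpos hΨbpos hΦ1 hΦb1
    hΨ1 hΨb1 m M hmM J hJ hJmM A D C B hAspec hDspec hA hD hBl hBu hCl hCu hsum f hf hconv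
end

section
/- Let m < M be real numbers, let Φ_1,…,Φ_n be positive linear maps on B(H) with Σ_{i=1}^n Φ_i(I) = I, let B_1,…,B_n be self-adjoint operators with m·I ≤ B_i ≤ M·I, and let f : [m, M] → ℝ be a continuous convex function. Then f((m+M)·I − Σ_i Φ_i(B_i)) ≤ (f(m) + f(M))·I − Σ_i Φ_i(f(B_i)) − δ_f · B̃ ≤ (f(m) + f(M))·I − Σ_i Φ_i(f(B_i)), where B̃ = I − (1/(M−m))·[ Σ_i Φ_i(|B_i − ((m+M)/2)·I|) + |Σ_i Φ_i(B_i) − ((m+M)/2)·I| ]. -/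
/-! A convex `f` on `[m, M]` lies below its piecewise-linear interpolant at `m`, `c = (m + M) / 2`
and `M`, which is an affine function plus `δ_f / (M - m) * |t - c|`. Monotonicity of the functional
calculus transfers this bound to every self-adjoint `X` with `m ≤ X ≤ M`. Apply it to each `B_i`,
averaged by the unital positive maps `Φ_i`, and to `(m + M) - Σ Φ_i(B_i)`, which is exactly as far
from `c` as `Σ Φ_i(B_i)` is; adding the two bounds gives the first inequality. The second holds
because `δ_f ≥ 0` and every `|X - c|` is at most `(M - m) / 2`, so `B̃ ≥ 0`. -/

open Set

theorem ConvexOn.sub_mul_le_chord {𝕜 : Type*} [Field 𝕜] [LinearOrder 𝕜]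
    [IsStrictOrderedRing 𝕜] {s : Set 𝕜} {f : 𝕜 → 𝕜} (hf : ConvexOn 𝕜 s f) {x y z : 𝕜}
    (hx : x ∈ s) (hz : z ∈ s) (hxy : x ≤ y) (hyz : y ≤ z) :
    (z - x) * f y ≤ (z - y) * f x + (y - x) * f z := by
  rcases hxy.eq_or_lt with rfl | hxy
  · simp
  rcases hyz.eq_or_lt with rfl | hyz
  · simp
  exact hf.secant_mono_aux1 hx hz hxy hyz

theorem ConvexOn.two_mul_map_midpoint_le {s : Set ℝ} {f : ℝ → ℝ} (hf : ConvexOn ℝ s f)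
    {x y : ℝ} (hx : x ∈ s) (hy : y ∈ s) : 2 * f ((x + y) / 2) ≤ f x + f y := by
  have h := hf.2 hx hy (by norm_num : (0 : ℝ) ≤ 1 / 2) (by norm_num : (0 : ℝ) ≤ 1 / 2)
    (by norm_num)
  simp only [smul_eq_mul] at h
  rw [show (x + y) / 2 = 1 / 2 * x + 1 / 2 * y by ring]
  linarith

/-- The right-hand side is the piecewise-linear interpolant of `f` at `m`, `(m + M) / 2` and `M`. -/
theorem ConvexOn.le_affine_add_abs_of_mem_Icc {f : ℝ → ℝ} {m M t : ℝ} (hmM : m < M)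
    (hf : ConvexOn ℝ (Icc m M) f) (ht : t ∈ Icc m M) :
    f t ≤ (f M - f m) / (M - m) * t +
        ((M * f m - m * f M) / (M - m) - (f m + f M - 2 * f ((m + M) / 2)) / 2) +
        (f m + f M - 2 * f ((m + M) / 2)) / (M - m) * |t - (m + M) / 2| := by
  have hc : (m + M) / 2 ∈ Icc m M := ⟨by linarith, by linarith⟩
  have hMm : 0 < M - m := sub_pos.2 hmM
  rcases le_total t ((m + M) / 2) with h | h
  · have hchord := hf.sub_mul_le_chord (left_mem_Icc.2 hmM.le) hc ht.1 h
    rw [abs_of_nonpos (by linarith), ← sub_nonneg]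
    field_simp
    linarith
  · have hchord := hf.sub_mul_le_chord hc (right_mem_Icc.2 hmM.le) h ht.2
    rw [abs_of_nonneg (by linarith), ← sub_nonneg]
    field_simp
    linarith

section OrderedModule

variable {E : Type*} [AddCommGroup E] [PartialOrder E] [IsOrderedAddMonoid E] [Module ℝ E]
  {a e : E} {m M : ℝ}

lemma smul_le_add_smul_sub (hM : a ≤ M • e) : m • e ≤ (m + M) • e - a := by
  rwa [le_sub_comm, ← sub_smul, add_sub_cancel_left]

lemma add_smul_sub_le_smul (hm : m • e ≤ a) : (m + M) • e - a ≤ M • e := by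
  rwa [sub_le_comm, ← sub_smul, add_sub_cancel_right]

end OrderedModule

section CStarAlgebra

variable {A : Type*} [CStarAlgebra A]

lemma cfc_abs_sub_smul_one {a : A} (ha : IsSelfAdjoint a) (c : ℝ) :
    cfc (fun t : ℝ ↦ |t|) (a - c • (1 : A)) = cfc (fun t : ℝ ↦ |t - c|) a := by
  rw [cfc_comp' (fun t : ℝ ↦ |t|) (· - c) a, cfc_sub .., cfc_id' .., cfc_const ..,
    Algebra.algebraMap_eq_smul_one]

lemma cfc_abs_neg {a : A} (ha : IsSelfAdjoint a) :
    cfc (fun t : ℝ ↦ |t|) (-a) = cfc (fun t : ℝ ↦ |t|) a := by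
  simp [← cfc_comp_neg (fun t : ℝ ↦ |t|) a]

lemma cfc_abs_reflect_sub_midpoint {a : A} (ha : IsSelfAdjoint a) (m M : ℝ) :
    cfc (fun t : ℝ ↦ |t|) ((m + M) • 1 - a - ((m + M) / 2) • (1 : A)) =
      cfc (fun t : ℝ ↦ |t|) (a - ((m + M) / 2) • (1 : A)) := by
  rw [← cfc_abs_neg (ha.sub ((IsSelfAdjoint.all _).smul (IsSelfAdjoint.one A)))]
  congr 1
  module

lemma cfc_affine_add_abs {a : A} (ha : IsSelfAdjoint a) (α γ ε c : ℝ) :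
    cfc (fun t : ℝ ↦ α * t + γ + ε * |t - c|) a =
      α • a + γ • 1 + ε • cfc (fun t : ℝ ↦ |t|) (a - c • (1 : A)) := by
  rw [cfc_add .., cfc_add .., cfc_const_mul_id .., cfc_const .., cfc_const_mul ..,
    cfc_abs_sub_smul_one ha, Algebra.algebraMap_eq_smul_one]

variable [PartialOrder A] [StarOrderedRing A]

lemma IsSelfAdjoint.of_smul_one_le_s11 {a : A} {m : ℝ} (h : m • (1 : A) ≤ a) :
    IsSelfAdjoint a := by
  simpa using (IsSelfAdjoint.of_nonneg (sub_nonneg.2 h)).add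
    ((IsSelfAdjoint.all m).smul (IsSelfAdjoint.one A))

lemma spectrum_subset_Icc_of_smul_one_le {a : A} {m M : ℝ} (hm : m • (1 : A) ≤ a)
    (hM : a ≤ M • (1 : A)) : spectrum ℝ a ⊆ Icc m M := by
  have ha := IsSelfAdjoint.of_smul_one_le_s11 hm
  rw [← Algebra.algebraMap_eq_smul_one] at hm hM
  exact fun t ht ↦ ⟨(algebraMap_le_iff_le_spectrum ha).1 hm t ht,
    (le_algebraMap_iff_spectrum_le ha).1 hM t ht⟩

lemma cfc_le_affine_add_abs {f : ℝ → ℝ} {m M α γ ε c : ℝ} (hf : ContinuousOn f (Icc m M))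
    (hfg : ∀ t ∈ Icc m M, f t ≤ α * t + γ + ε * |t - c|) {a : A} (hm : m • (1 : A) ≤ a)
    (hM : a ≤ M • (1 : A)) :
    cfc f a ≤ α • a + γ • 1 + ε • cfc (fun t : ℝ ↦ |t|) (a - c • (1 : A)) := by
  have hspec := spectrum_subset_Icc_of_smul_one_le hm hM
  rw [← cfc_affine_add_abs (IsSelfAdjoint.of_smul_one_le_s11 hm)]
  exact cfc_mono (fun t ht ↦ hfg t (hspec ht)) (hf.mono hspec)

lemma cfc_abs_sub_midpoint_le {a : A} {m M : ℝ} (hm : m • (1 : A) ≤ a)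
    (hM : a ≤ M • (1 : A)) :
    cfc (fun t : ℝ ↦ |t|) (a - ((m + M) / 2) • (1 : A)) ≤ ((M - m) / 2) • (1 : A) := by
  have ha := IsSelfAdjoint.of_smul_one_le_s11 hm
  have hspec := spectrum_subset_Icc_of_smul_one_le hm hM
  rw [cfc_abs_sub_smul_one ha, ← Algebra.algebraMap_eq_smul_one]
  refine cfc_le_algebraMap _ _ _ fun t ht ↦ abs_le.2 ?_
  obtain ⟨h₁, h₂⟩ := hspec ht
  constructor <;> linarith

lemma one_sub_inv_smul_add_nonneg {m M : ℝ} (hmM : m < M) {x y : A}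
    (hx : x ≤ ((M - m) / 2) • 1) (hy : y ≤ ((M - m) / 2) • 1) :
    0 ≤ 1 - (M - m)⁻¹ • (x + y) := by
  have hMm : 0 < M - m := sub_pos.2 hmM
  calc (0 : A) = 1 - (M - m)⁻¹ • (((M - m) / 2) • 1 + ((M - m) / 2) • 1) := by
        rw [← add_smul, add_halves, smul_smul, inv_mul_cancel₀ hMm.ne', one_smul, sub_self]
    _ ≤ 1 - (M - m)⁻¹ • (x + y) := by gcongr

end CStarAlgebra

section UnitalPositiveMaps

variable {ι A B : Type*} [Fintype ι] [CStarAlgebra A] [CStarAlgebra B] {Φ : ι → A →ₗ[ℂ] B}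

lemma sum_map_smul_one (hΦ1 : ∑ i, Φ i 1 = 1) (r : ℝ) :
    ∑ i, Φ i (r • (1 : A)) = r • (1 : B) := by
  simp only [LinearMap.map_smul_of_tower, ← Finset.smul_sum, hΦ1]

variable [PartialOrder A] [StarOrderedRing A] [PartialOrder B] [StarOrderedRing B]

lemma sum_map_le_sum_map (hΦpos : ∀ i, ∀ x, 0 ≤ x → 0 ≤ Φ i x) {x y : ι → A}
    (h : ∀ i, x i ≤ y i) : ∑ i, Φ i (x i) ≤ ∑ i, Φ i (y i) :=
  Finset.sum_le_sum fun i _ ↦ (PositiveLinearMap.mk₀ _ (hΦpos i)).monotone' (h i)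

lemma sum_map_cfc_le_affine_add_abs (hΦpos : ∀ i, ∀ x, 0 ≤ x → 0 ≤ Φ i x)
    (hΦ1 : ∑ i, Φ i 1 = 1) {f : ℝ → ℝ} {m M α γ ε c : ℝ} (hf : ContinuousOn f (Icc m M))
    (hfg : ∀ t ∈ Icc m M, f t ≤ α * t + γ + ε * |t - c|) {b : ι → A}
    (hm : ∀ i, m • (1 : A) ≤ b i) (hM : ∀ i, b i ≤ M • (1 : A)) :
    ∑ i, Φ i (cfc f (b i)) ≤ α • ∑ i, Φ i (b i) + γ • 1 +
      ε • ∑ i, Φ i (cfc (fun t : ℝ ↦ |t|) (b i - c • (1 : A))) := by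
  refine (sum_map_le_sum_map hΦpos fun i ↦
    cfc_le_affine_add_abs hf hfg (hm i) (hM i)).trans_eq ?_
  simp only [map_add, LinearMap.map_smul_of_tower, Finset.sum_add_distrib, ← Finset.smul_sum,
    hΦ1]

end UnitalPositiveMaps

theorem jensen_mercer_refined_general {H : Type*} [NormedAddCommGroup H] [InnerProductSpace ℂ H]
    [CompleteSpace H] {n : ℕ} (m M : ℝ) (hmM : m < M)
    (Φ : Fin n → (H →L[ℂ] H) →ₗ[ℂ] (H →L[ℂ] H))
    (hΦpos : ∀ i, ∀ T : H →L[ℂ] H, 0 ≤ T → 0 ≤ Φ i T)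
    (hΦ1 : ∑ i, Φ i 1 = (1 : H →L[ℂ] H))
    (B : Fin n → H →L[ℂ] H)
    (hBl : ∀ i, m • 1 ≤ B i) (hBu : ∀ i, B i ≤ M • 1)
    (f : ℝ → ℝ) (hf : ContinuousOn f (Set.Icc m M)) (hconv : ConvexOn ℝ (Set.Icc m M) f) :
    cfc f ((m + M) • (1 : H →L[ℂ] H) - ∑ i, Φ i (B i)) ≤
        (f m + f M) • (1 : H →L[ℂ] H) - ∑ i, Φ i (cfc f (B i)) -
          (f m + f M - 2 * f ((m + M) / 2)) •
            ((1 : H →L[ℂ] H) -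
              (M - m)⁻¹ •
                (∑ i, Φ i (opAbs (B i - ((m + M) / 2) • 1)) +
                  opAbs (∑ i, Φ i (B i) - ((m + M) / 2) • 1))) ∧
      (f m + f M) • (1 : H →L[ℂ] H) - ∑ i, Φ i (cfc f (B i)) -
          (f m + f M - 2 * f ((m + M) / 2)) •
            ((1 : H →L[ℂ] H) -
              (M - m)⁻¹ •
                (∑ i, Φ i (opAbs (B i - ((m + M) / 2) • 1)) +
                  opAbs (∑ i, Φ i (B i) - ((m + M) / 2) • 1))) ≤
        (f m + f M) • (1 : H →L[ℂ] H) - ∑ i, Φ i (cfc f (B i)) := by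
  unfold opAbs
  have hmaj (t) (ht : t ∈ Icc m M) := hconv.le_affine_add_abs_of_mem_Icc hmM ht
  set A := ∑ i, Φ i (B i)
  have hAl : m • 1 ≤ A := sum_map_smul_one hΦ1 m ▸ sum_map_le_sum_map hΦpos hBl
  have hAu : A ≤ M • 1 := sum_map_smul_one hΦ1 M ▸ sum_map_le_sum_map hΦpos hBu
  have hsum := sum_map_cfc_le_affine_add_abs hΦpos hΦ1 hf hmaj hBl hBu
  have hrefl := cfc_le_affine_add_abs hf hmaj (smul_le_add_smul_sub hAu)
    (add_smul_sub_le_smul hAl)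
  rw [cfc_abs_reflect_sub_midpoint (IsSelfAdjoint.of_smul_one_le_s11 hAl)] at hrefl
  have hδ : 0 ≤ f m + f M - 2 * f ((m + M) / 2) := sub_nonneg.2 <|
    hconv.two_mul_map_midpoint_le (left_mem_Icc.2 hmM.le) (right_mem_Icc.2 hmM.le)
  have hB : 0 ≤ 1 - (M - m)⁻¹ •
      (∑ i, Φ i (cfc (fun t : ℝ ↦ |t|) (B i - ((m + M) / 2) • 1)) +
        cfc (fun t : ℝ ↦ |t|) (A - ((m + M) / 2) • 1)) :=
    one_sub_inv_smul_add_nonneg hmM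
      ((sum_map_le_sum_map hΦpos fun i ↦ cfc_abs_sub_midpoint_le (hBl i) (hBu i)).trans_eq
        (sum_map_smul_one hΦ1 _))
      (cfc_abs_sub_midpoint_le hAl hAu)
  refine ⟨?_, sub_le_self _ (smul_nonneg hδ hB)⟩
  calc _ ≤ _ := hrefl
    _ ≤ _ := le_add_of_nonneg_right (sub_nonneg.2 hsum)
    -- the affine parts of the majorant at `A` and at `(m + M) - A` add up to `f m + f M - δ_f`
    _ = _ := by
      have hMm := (sub_pos.2 hmM).ne'
      match_scalars <;> field_simp <;> ring

/-- refined Jensen–Mercer operator inequality, Corollary 3.1. -/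
theorem jensen_mercer_refined {H : Type*} [NormedAddCommGroup H] [InnerProductSpace ℂ H]
    [CompleteSpace H] {n : ℕ} (m M : ℝ) (hmM : m < M)
    (Φ : Fin n → (H →L[ℂ] H) →ₗ[ℂ] (H →L[ℂ] H))
    (hΦpos : ∀ i, ∀ T : H →L[ℂ] H, 0 ≤ T → 0 ≤ Φ i T)
    (hΦ1 : ∑ i, Φ i 1 = (1 : H →L[ℂ] H))
    (B : Fin n → H →L[ℂ] H) (hBsa : ∀ i, IsSelfAdjoint (B i))
    (hBl : ∀ i, m • 1 ≤ B i) (hBu : ∀ i, B i ≤ M • 1)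
    (f : ℝ → ℝ) (hf : ContinuousOn f (Set.Icc m M)) (hconv : ConvexOn ℝ (Set.Icc m M) f) :
    cfc f ((m + M) • (1 : H →L[ℂ] H) - ∑ i, Φ i (B i)) ≤
        (f m + f M) • (1 : H →L[ℂ] H) - ∑ i, Φ i (cfc f (B i)) -
          (f m + f M - 2 * f ((m + M) / 2)) •
            ((1 : H →L[ℂ] H) -
              (M - m)⁻¹ •
                (∑ i, Φ i (opAbs (B i - ((m + M) / 2) • 1)) +
                  opAbs (∑ i, Φ i (B i) - ((m + M) / 2) • 1))) ∧
      (f m + f M) • (1 : H →L[ℂ] H) - ∑ i, Φ i (cfc f (B i)) -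
          (f m + f M - 2 * f ((m + M) / 2)) •
            ((1 : H →L[ℂ] H) -
              (M - m)⁻¹ •
                (∑ i, Φ i (opAbs (B i - ((m + M) / 2) • 1)) +
                  opAbs (∑ i, Φ i (B i) - ((m + M) / 2) • 1))) ≤
        (f m + f M) • (1 : H →L[ℂ] H) - ∑ i, Φ i (cfc f (B i)) :=
  jensen_mercer_refined_general m M hmM Φ hΦpos hΦ1 B hBl hBu f hf hconv
end
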